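/- arXiv:1510.02238 — 2 statements merged into one kernel-verified Lean document; each statement's English description precedes it below -/
import Mathlib

section
/- For λ' > ln 4 + ln z² (with z > 0), the series Σ_{i=0}^{∞} b_i z^{2i+1} converges absolutely, where b_i = e^{-i λ'} · Σ_{j=0}^{i} (-1)^j (λ'^j/j!) · C(2i-j, i). -/
/-- For `λ' > ln 4 + ln z²` (with `z > 0`), the series `Σ b_i z^{2i+1}` converges
absolutely, where `b_i = e^{-iλ'} Σ_{j=0}^i (-1)^j (λ'^j/j!) C(2i-j, i)`. -/
theorem stmt2 (lam z : ℝ) (hz : 0 < z)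
    (hlam : Real.log 4 + Real.log (z ^ 2) < lam) :
    Summable (fun i : ℕ =>
      |(Real.exp (-(i : ℝ) * lam) *
          ∑ j ∈ Finset.range (i + 1),
            (-1 : ℝ) ^ j * (lam ^ j / (Nat.factorial j : ℝ)) * (Nat.choose (2 * i - j) i : ℝ))
        * z ^ (2 * i + 1)|) := by
  set r : ℝ := 4 * z ^ 2 * Real.exp (-lam) with hrdef
  have hr0 : 0 ≤ r := by positivity
  have hr1 : r < 1 := by
    have h4z : (0:ℝ) < 4 * z ^ 2 := by positivity
    rw [← Real.log_mul (by norm_num) (by positivity)] at hlam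
    have hlt : 4 * z ^ 2 < Real.exp lam := (Real.log_lt_iff_lt_exp h4z).mp hlam
    have : r < Real.exp lam * Real.exp (-lam) := by
      apply mul_lt_mul_of_pos_right hlt (Real.exp_pos _)
    rwa [← Real.exp_add, add_neg_cancel, Real.exp_zero] at this
  have hgeo : Summable (fun i : ℕ => Real.exp |lam| * z * r ^ i) :=
    (summable_geometric_of_lt_one hr0 hr1).mul_left _
  refine Summable.of_nonneg_of_le (fun i => abs_nonneg _) (fun i => ?_) hgeo
  have hSbound : |∑ j ∈ Finset.range (i + 1),
      (-1 : ℝ) ^ j * (lam ^ j / (Nat.factorial j : ℝ)) * (Nat.choose (2 * i - j) i : ℝ)|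
      ≤ Real.exp |lam| * 4 ^ i := by
    calc |∑ j ∈ Finset.range (i + 1),
        (-1 : ℝ) ^ j * (lam ^ j / (Nat.factorial j : ℝ)) * (Nat.choose (2 * i - j) i : ℝ)|
        ≤ ∑ j ∈ Finset.range (i + 1),
          |(-1 : ℝ) ^ j * (lam ^ j / (Nat.factorial j : ℝ)) * (Nat.choose (2 * i - j) i : ℝ)| :=
        Finset.abs_sum_le_sum_abs _ _
      _ ≤ ∑ j ∈ Finset.range (i + 1),
          (|lam| ^ j / (Nat.factorial j : ℝ)) * 4 ^ i := by
        apply Finset.sum_le_sum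
        intro j hj
        rw [abs_mul, abs_mul, abs_pow, abs_neg, abs_one, one_pow, one_mul, abs_div, abs_pow,
          Nat.abs_cast, Nat.abs_cast]
        apply mul_le_mul_of_nonneg_left _ (by positivity)
        have h1 : Nat.choose (2 * i - j) i ≤ Nat.choose (2 * i + 1) i :=
          Nat.choose_le_choose i (by omega)
        have h2 : Nat.choose (2 * i + 1) i ≤ 4 ^ i := Nat.choose_middle_le_pow i
        calc ((Nat.choose (2 * i - j) i : ℝ)) ≤ ((4 ^ i : ℕ) : ℝ) := by
              exact_mod_cast h1.trans h2
          _ = 4 ^ i := by push_cast; ring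
      _ = (∑ j ∈ Finset.range (i + 1), |lam| ^ j / (Nat.factorial j : ℝ)) * 4 ^ i := by
        rw [Finset.sum_mul]
      _ ≤ Real.exp |lam| * 4 ^ i := by
        apply mul_le_mul_of_nonneg_right (Real.sum_le_exp_of_nonneg (abs_nonneg _) _)
          (by positivity)
  calc |(Real.exp (-(i : ℝ) * lam) *
        ∑ j ∈ Finset.range (i + 1),
          (-1 : ℝ) ^ j * (lam ^ j / (Nat.factorial j : ℝ)) * (Nat.choose (2 * i - j) i : ℝ))
      * z ^ (2 * i + 1)|
      = Real.exp (-(i : ℝ) * lam) *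
        |∑ j ∈ Finset.range (i + 1),
          (-1 : ℝ) ^ j * (lam ^ j / (Nat.factorial j : ℝ)) * (Nat.choose (2 * i - j) i : ℝ)| *
        z ^ (2 * i + 1) := by
        rw [abs_mul, abs_mul, Real.abs_exp, abs_pow, abs_of_pos hz]
    _ ≤ Real.exp (-(i : ℝ) * lam) * (Real.exp |lam| * 4 ^ i) * z ^ (2 * i + 1) := by
        apply mul_le_mul_of_nonneg_right _ (by positivity)
        exact mul_le_mul_of_nonneg_left hSbound (Real.exp_pos _).le
    _ = Real.exp |lam| * z * r ^ i := by
        rw [hrdef, mul_pow, mul_pow, ← Real.exp_nat_mul]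
        rw [pow_succ, pow_mul]
        ring_nf
end

section
/- Let the positions of vehicles on a line be such that consecutive interdistances I_1, I_2, ... are i.i.d. Exp(λ), and let τ_n be the distance between consecutive retransmitting nodes on the shortest path with coverage radius R. Then for x₁ ≤ R, the first hop length satisfies F_{τ_1}(x_1) = e^{-λ(R - x_1)}(1 - e^{-λ x_1}), and for x_1 ≥ R, F_{τ_1}(x_1) = 1 - e^{-λ x_1}. -/
open MeasureTheory

/-- Position of the `n`-th vehicle: partial sum of the interdistances. -/
def vehiclePos {Ω : Type*} (I : ℕ → Ω → ℝ) (n : ℕ) (ω : Ω) : ℝ :=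
  ∑ i ∈ Finset.range (n + 1), I i ω

open Classical in
/-- Distance `τ_1` from the origin to the first retransmitting node: the farthest
vehicle within coverage `R` if there is one, else the first vehicle. -/
noncomputable def firstHop {Ω : Type*} (I : ℕ → Ω → ℝ) (R : ℝ) (ω : Ω) : ℝ :=
  if ∃ n, vehiclePos I n ω ≤ R then
    sSup {y | (∃ n, y = vehiclePos I n ω) ∧ y ≤ R}
  else vehiclePos I 0 ω

/-!
For `x ≤ R`, almost surely the vehicle positions increase and eventually exceed `R`, so
`τ₁ ≤ x` happens exactly when, for some `k`, the position `S` of vehicle `k` satisfies `S ≤ x`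
and the next one lies beyond `R`; these events are disjoint. The gap after `S` is independent of
`S` and `Exp(λ)`, so this event has probability `e^{-λR} E[e^{λS}; S ≤ x]`. The law of `S` is the
convolution of `k + 1` exponential laws, and against it the weight `e^{λs}` cancels the exponential
densities, leaving `λ^{k+1}` times the volume of a simplex: `E[e^{λS}; S ≤ x] = (λx)^{k+1}/(k+1)!`.
Summing over `k` gives `e^{-λR}(e^{λx} - 1)`. For `x ≥ R`, `τ₁ ≤ x` iff the first gap is at most
`x`: either the first vehicle lies within `R`, and then so does `τ₁`, or `τ₁` is the first gap.
-/

open MeasureTheory ProbabilityTheory Real Set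
open scoped ENNReal Nat

section ExpMeasure

variable {r : ℝ}

instance : SFinite (expMeasure r) := by
  unfold expMeasure gammaMeasure
  infer_instance

lemma expMeasure_Iic (hr : 0 < r) (x : ℝ) :
    expMeasure r (Iic x) = ENNReal.ofReal (if 0 ≤ x then 1 - exp (-(r * x)) else 0) := by
  have := isProbabilityMeasure_expMeasure hr
  rw [← ofReal_cdf, cdf_expMeasure_eq hr]

lemma expMeasure_Ioi (hr : 0 < r) {b : ℝ} (hb : 0 ≤ b) :
    expMeasure r (Ioi b) = ENNReal.ofReal (exp (-(r * b))) := by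
  have := isProbabilityMeasure_expMeasure hr
  have hexp : exp (-(r * b)) ≤ 1 := exp_le_one_iff.2 (neg_nonpos.2 (mul_nonneg hr.le hb))
  rw [← compl_Iic, prob_compl_eq_one_sub measurableSet_Iic, expMeasure_Iic hr, if_pos hb,
    ← ENNReal.ofReal_one, ← ENNReal.ofReal_sub _ (sub_nonneg.2 hexp), sub_sub_cancel]

lemma lintegral_exp_mul_expMeasure (hr : 0 < r) {f : ℝ → ℝ≥0∞} (hf : Measurable f) :
    ∫⁻ t, ENNReal.ofReal (exp (r * t)) * f t ∂expMeasure r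
      = ENNReal.ofReal r * ∫⁻ t in Ici 0, f t := by
  have hdensity : ∀ t, exponentialPDF r t * (ENNReal.ofReal (exp (r * t)) * f t)
      = (Ici 0).indicator (fun t ↦ ENNReal.ofReal r * f t) t := by
    intro t
    by_cases ht : 0 ≤ t
    · rw [indicator_of_mem (mem_Ici.2 ht), exponentialPDF_of_nonneg ht, ← mul_assoc,
        ← ENNReal.ofReal_mul (by positivity), mul_assoc, ← exp_add, neg_add_cancel, exp_zero,
        mul_one]
    · rw [indicator_of_notMem (notMem_Ici.2 (not_le.1 ht)), exponentialPDF_of_neg (not_le.1 ht),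
        zero_mul]
  rw [show expMeasure r = volume.withDensity (exponentialPDF r) from rfl,
    lintegral_withDensity_eq_lintegral_mul _
      (show Measurable (exponentialPDF r) from (measurable_exponentialPDFReal r).ennreal_ofReal)
      (by fun_prop)]
  simp only [Pi.mul_apply, hdensity]
  rw [lintegral_indicator measurableSet_Ici, lintegral_const_mul _ hf]

lemma map_eq_expMeasure_of_cdf {Ω : Type*} [MeasurableSpace Ω] {μ : Measure Ω}
    [IsProbabilityMeasure μ] (hr : 0 < r) {f : Ω → ℝ} (hf : Measurable f)
    (hcdf : ∀ x, 0 ≤ x → (μ {ω | f ω ≤ x}).toReal = 1 - exp (-(r * x)))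
    (hcdf_neg : ∀ x < 0, μ {ω | f ω ≤ x} = 0) :
    μ.map f = expMeasure r := by
  have := isProbabilityMeasure_expMeasure hr
  refine Measure.ext_of_Iic _ _ fun x ↦ ?_
  rw [Measure.map_apply hf measurableSet_Iic, expMeasure_Iic hr]
  split_ifs with hx
  · rw [← hcdf x hx, ENNReal.ofReal_toReal (measure_ne_top _ _)]
    rfl
  · rw [ENNReal.ofReal_zero]
    exact hcdf_neg x (not_le.1 hx)

end ExpMeasure

lemma ofReal_mul_setLIntegral_Icc_pow_div_factorial {r a : ℝ} (hr : 0 ≤ r) (ha : 0 ≤ a) (k : ℕ) :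
    ENNReal.ofReal r * ∫⁻ t in Icc 0 a, ENNReal.ofReal ((r * (a - t)) ^ k / k !)
      = ENNReal.ofReal ((r * a) ^ (k + 1) / (k + 1)!) := by
  have hnonneg : 0 ≤ᵐ[volume.restrict (Icc 0 a)] fun t ↦ (r * (a - t)) ^ k / k ! :=
    (ae_restrict_iff' measurableSet_Icc).2 <| .of_forall fun t ht ↦
      by have := mul_nonneg hr (sub_nonneg.2 ht.2); positivity
  rw [← ofReal_integral_eq_lintegral_ofReal (Continuous.integrableOn_Icc (by fun_prop)) hnonneg,
    ← ENNReal.ofReal_mul hr, integral_Icc_eq_integral_Ioc, ← intervalIntegral.integral_of_le ha,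
    intervalIntegral.integral_comp_sub_left (fun u ↦ (r * u) ^ k / k !) a]
  congr 1
  simp only [sub_self, sub_zero, mul_pow, mul_div_assoc, intervalIntegral.integral_const_mul,
    intervalIntegral.integral_div, integral_pow, Nat.factorial_succ]
  rw [zero_pow k.succ_ne_zero]
  push_cast
  field_simp
  ring

noncomputable def expMeasureConvPow (r : ℝ) : ℕ → Measure ℝ
  | 0 => Measure.dirac 0
  | k + 1 => expMeasure r ∗ expMeasureConvPow r k

instance (r : ℝ) (k : ℕ) : SFinite (expMeasureConvPow r k) := by
  induction k with
  | zero => unfold expMeasureConvPow; infer_instance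
  | succ k ih => unfold expMeasureConvPow; infer_instance

lemma setLIntegral_Iic_exp_expMeasureConvPow {r : ℝ} (hr : 0 < r) (k : ℕ) (a : ℝ) :
    ∫⁻ s in Iic a, ENNReal.ofReal (exp (r * s)) ∂expMeasureConvPow r k
      = if 0 ≤ a then ENNReal.ofReal ((r * a) ^ k / k !) else 0 := by
  induction k generalizing a with
  | zero =>
    rw [← lintegral_indicator measurableSet_Iic, expMeasureConvPow, lintegral_dirac]
    by_cases ha : 0 ≤ a <;> simp [ha]
  | succ k ih =>
    have hshift : ∀ t s, (Iic a).indicator (fun s ↦ ENNReal.ofReal (exp (r * s))) (t + s)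
        = ENNReal.ofReal (exp (r * t))
          * (Iic (a - t)).indicator (fun s ↦ ENNReal.ofReal (exp (r * s))) s := by
      intro t s
      by_cases hs : s ≤ a - t
      · rw [indicator_of_mem (show t + s ∈ Iic a by simp only [mem_Iic]; linarith),
          indicator_of_mem (mem_Iic.2 hs), ← ENNReal.ofReal_mul (exp_pos _).le, ← exp_add,
          mul_add]
      · rw [indicator_of_notMem (show t + s ∉ Iic a by simp only [mem_Iic]; linarith),
          indicator_of_notMem (by simpa using hs), mul_zero]
    rw [← lintegral_indicator measurableSet_Iic, expMeasureConvPow,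
      Measure.lintegral_conv ((by fun_prop : Measurable _).indicator measurableSet_Iic)]
    simp only [hshift]
    simp_rw [lintegral_const_mul' _ _ ENNReal.ofReal_ne_top,
      lintegral_indicator measurableSet_Iic, ih]
    rw [lintegral_exp_mul_expMeasure hr
      (Measurable.ite (measurableSet_le measurable_const (by fun_prop)) (by fun_prop)
        measurable_const)]
    split_ifs with ha
    · have hcut : (fun t ↦ if 0 ≤ a - t then ENNReal.ofReal ((r * (a - t)) ^ k / k !) else 0)
          = (Iic a).indicator fun t ↦ ENNReal.ofReal ((r * (a - t)) ^ k / k !) := by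
        ext t
        simp only [sub_nonneg, indicator_apply, mem_Iic]
      rw [hcut, setLIntegral_indicator measurableSet_Iic, Iic_inter_Ici,
        ofReal_mul_setLIntegral_Icc_pow_div_factorial hr.le ha]
    · rw [setLIntegral_congr_fun measurableSet_Ici fun t (ht : 0 ≤ t) ↦ if_neg (by linarith),
        lintegral_zero, mul_zero]

section Independent

variable {Ω : Type*} [MeasurableSpace Ω] {μ : Measure Ω} {I : ℕ → Ω → ℝ}

lemma ProbabilityTheory.iIndepFun.measure_forall_le_eq_zero (hindep : iIndepFun I μ) {R : ℝ}
    {q : ℝ≥0∞} (hq : q < 1) (hle : ∀ n, μ {ω | I n ω ≤ R} ≤ q) :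
    μ {ω | ∀ n, I n ω ≤ R} = 0 := by
  have hbound : ∀ n, μ {ω | ∀ n, I n ω ≤ R} ≤ q ^ n := fun n ↦ calc
    μ {ω | ∀ n, I n ω ≤ R} ≤ μ (⋂ i ∈ Finset.range n, I i ⁻¹' Iic R) :=
      measure_mono fun ω hω ↦ mem_iInter₂.2 fun i _ ↦ hω i
    _ = ∏ i ∈ Finset.range n, μ (I i ⁻¹' Iic R) :=
      hindep.meas_biInter fun i _ ↦ ⟨Iic R, measurableSet_Iic, rfl⟩
    _ ≤ q ^ (Finset.range n).card := Finset.prod_le_pow_card _ _ q fun i _ ↦ hle i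
    _ = q ^ n := by rw [Finset.card_range]
  exact le_antisymm (ge_of_tendsto' (ENNReal.tendsto_pow_atTop_nhds_zero_of_lt_one hq) hbound)
    bot_le

variable {r : ℝ}

lemma measure_le_lt_add_of_indepFun [IsFiniteMeasure μ] {S X : Ω → ℝ} (hS : Measurable S)
    (hX : Measurable X) (hSX : IndepFun S X μ) (hr : 0 < r) (hX_law : μ.map X = expMeasure r)
    {a b : ℝ} (hab : a ≤ b) :
    μ {ω | S ω ≤ a ∧ b < S ω + X ω}
      = ENNReal.ofReal (exp (-(r * b))) * ∫⁻ s in Iic a, ENNReal.ofReal (exp (r * s)) ∂μ.map S := by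
  set C : Set (ℝ × ℝ) := {p | p.1 ≤ a ∧ b < p.1 + p.2}
  have hC : MeasurableSet C :=
    (measurableSet_le measurable_fst measurable_const).inter
      (measurableSet_lt measurable_const (measurable_fst.add measurable_snd))
  have hslice : ∀ s, expMeasure r (Prod.mk s ⁻¹' C)
      = ENNReal.ofReal (exp (-(r * b)))
        * (Iic a).indicator (fun s ↦ ENNReal.ofReal (exp (r * s))) s := by
    intro s
    by_cases hs : s ≤ a
    · have hC_s : Prod.mk s ⁻¹' C = Ioi (b - s) := by
        ext t
        simp only [C, mem_preimage, mem_ofPred_eq, mem_Ioi, hs, true_and]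
        constructor <;> intro h <;> linarith
      rw [hC_s, expMeasure_Ioi hr (by linarith), indicator_of_mem (mem_Iic.2 hs),
        ← ENNReal.ofReal_mul (exp_pos _).le, ← exp_add]
      ring_nf
    · have hC_s : Prod.mk s ⁻¹' C = ∅ := by
        ext t
        simp [C, hs]
      rw [hC_s, measure_empty, indicator_of_notMem (by simpa using hs), mul_zero]
  rw [show {ω | S ω ≤ a ∧ b < S ω + X ω} = (fun ω ↦ (S ω, X ω)) ⁻¹' C from rfl,
    ← Measure.map_apply (hS.prodMk hX) hC,
    (indepFun_iff_map_prod_eq_prod_map_map hS.aemeasurable hX.aemeasurable).1 hSX, hX_law,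
    Measure.prod_apply hC]
  simp only [hslice]
  rw [lintegral_const_mul' _ _ ENNReal.ofReal_ne_top, lintegral_indicator measurableSet_Iic]

variable [IsProbabilityMeasure μ]

lemma map_sum_range_eq_expMeasureConvPow (hmeas : ∀ n, Measurable (I n))
    (hindep : iIndepFun I μ) (hlaw : ∀ n, μ.map (I n) = expMeasure r) (k : ℕ) :
    μ.map (∑ i ∈ Finset.range k, I i) = expMeasureConvPow r k := by
  induction k with
  | zero => simp [expMeasureConvPow, Pi.zero_def]
  | succ k ih =>
    have hindep_k := hindep.indepFun_finsetSum_of_notMem hmeas (Finset.notMem_range_self (n := k))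
    rw [Finset.sum_range_succ, add_comm,
      hindep_k.symm.map_add_eq_map_conv_map (hmeas k) (by fun_prop), hlaw, ih, expMeasureConvPow]

lemma measure_sum_range_le_lt_add (hr : 0 < r) (hmeas : ∀ n, Measurable (I n))
    (hindep : iIndepFun I μ) (hlaw : ∀ n, μ.map (I n) = expMeasure r) (n : ℕ) {a b : ℝ}
    (ha : 0 ≤ a) (hab : a ≤ b) :
    μ {ω | (∑ i ∈ Finset.range n, I i) ω ≤ a ∧ b < (∑ i ∈ Finset.range n, I i) ω + I n ω}
      = ENNReal.ofReal (exp (-(r * b)) * ((r * a) ^ n / n !)) := by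
  rw [measure_le_lt_add_of_indepFun (by fun_prop) (hmeas n)
      (hindep.indepFun_finsetSum_of_notMem hmeas Finset.notMem_range_self) hr (hlaw n) hab,
    map_sum_range_eq_expMeasureConvPow hmeas hindep hlaw, setLIntegral_Iic_exp_expMeasureConvPow hr,
    if_pos ha, ← ENNReal.ofReal_mul (exp_pos _).le]

end Independent

section Deterministic

variable {Ω : Type*} {I : ℕ → Ω → ℝ} {R x : ℝ} {ω : Ω}

@[simp]
lemma vehiclePos_zero : vehiclePos I 0 ω = I 0 ω := by
  simp [vehiclePos]

lemma vehiclePos_succ (n : ℕ) : vehiclePos I (n + 1) ω = vehiclePos I n ω + I (n + 1) ω :=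
  Finset.sum_range_succ _ _

lemma firstHop_le_iff_of_le_radius (hmono : Monotone (vehiclePos I · ω))
    (hfar : ∃ n, R < vehiclePos I n ω) (hxR : x ≤ R) :
    firstHop I R ω ≤ x ↔ ∃ k, vehiclePos I k ω ≤ x ∧ R < vehiclePos I (k + 1) ω := by
  constructor
  · intro hle
    have hnear : ∃ n, vehiclePos I n ω ≤ R := by
      by_contra hnear
      rw [firstHop, if_neg hnear] at hle
      exact hnear ⟨0, hle.trans hxR⟩
    rw [firstHop, if_pos hnear] at hle
    obtain ⟨n, hn⟩ := hnear
    obtain ⟨k, hk⟩ : ∃ k, Nat.find hfar = k + 1 := Nat.exists_eq_succ_of_ne_zero fun h ↦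
      (h ▸ Nat.find_spec hfar).not_ge ((hmono n.zero_le).trans hn)
    have hkR : vehiclePos I k ω ≤ R := not_lt.1 (Nat.find_min hfar (by omega))
    have hk_le : vehiclePos I k ω ≤ sSup {y | (∃ n, y = vehiclePos I n ω) ∧ y ≤ R} :=
      le_csSup ⟨R, fun y hy ↦ hy.2⟩ ⟨⟨k, rfl⟩, hkR⟩
    exact ⟨k, hk_le.trans hle, hk ▸ Nat.find_spec hfar⟩
  · rintro ⟨k, hkx, hkR⟩
    rw [firstHop, if_pos ⟨k, hkx.trans hxR⟩]
    refine csSup_le ?_ ?_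
    · exact ⟨vehiclePos I k ω, ⟨k, rfl⟩, hkx.trans hxR⟩
    rintro _ ⟨⟨n, rfl⟩, hnR⟩
    have hnk : n ≤ k := by
      by_contra hkn
      exact (hkR.trans_le (hmono (not_le.1 hkn))).not_ge hnR
    exact (hmono hnk).trans hkx

lemma firstHop_le_iff_of_radius_le (hmono : Monotone (vehiclePos I · ω)) (hRx : R ≤ x) :
    firstHop I R ω ≤ x ↔ vehiclePos I 0 ω ≤ x := by
  rw [firstHop]
  split_ifs with hnear
  · obtain ⟨n, hn⟩ := hnear
    have h0 : vehiclePos I 0 ω ≤ R := (hmono n.zero_le).trans hn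
    refine iff_of_true (le_trans (csSup_le ?_ fun y hy ↦ hy.2) hRx) (h0.trans hRx)
    exact ⟨vehiclePos I 0 ω, ⟨0, rfl⟩, h0⟩
  · rfl

end Deterministic

lemma Real.hasSum_pow_succ_div_factorial (x : ℝ) :
    HasSum (fun k : ℕ ↦ x ^ (k + 1) / (k + 1)!) (exp x - 1) := by
  have hexp := NormedSpace.expSeries_div_hasSum_exp x
  rw [← Real.exp_eq_exp_ℝ] at hexp
  simpa using (hasSum_nat_add_iff' 1).2 hexp

section FirstHop

variable {Ω : Type*} [MeasurableSpace Ω] {μ : Measure Ω} {I : ℕ → Ω → ℝ} {r R x : ℝ}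

lemma measurable_vehiclePos (hmeas : ∀ n, Measurable (I n)) (n : ℕ) :
    Measurable (vehiclePos I n) := by
  unfold vehiclePos
  fun_prop

lemma ae_nonneg_of_map_eq_expMeasure (hr : 0 < r) {f : Ω → ℝ} (hf : Measurable f)
    (hlaw : μ.map f = expMeasure r) : ∀ᵐ ω ∂μ, 0 ≤ f ω := by
  have hneg : μ (f ⁻¹' Iio 0) = 0 := by
    rw [← Measure.map_apply hf measurableSet_Iio, hlaw]
    exact measure_mono_null Iio_subset_Iic_self (by simp [expMeasure_Iic hr])
  filter_upwards [measure_eq_zero_iff_ae_notMem.1 hneg] with ω hω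
  exact not_lt.1 hω

lemma ae_monotone_vehiclePos (hnonneg : ∀ n, ∀ᵐ ω ∂μ, 0 ≤ I n ω) :
    ∀ᵐ ω ∂μ, Monotone (vehiclePos I · ω) := by
  filter_upwards [ae_all_iff.2 hnonneg] with ω hω
  exact monotone_nat_of_le_succ fun n ↦ by
    rw [vehiclePos_succ]
    linarith [hω (n + 1)]

lemma firstHop_le_ae_eq_of_radius_le (hnonneg : ∀ n, ∀ᵐ ω ∂μ, 0 ≤ I n ω) (hRx : R ≤ x) :
    {ω | firstHop I R ω ≤ x} =ᵐ[μ] {ω | I 0 ω ≤ x} := by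
  filter_upwards [ae_monotone_vehiclePos hnonneg] with ω hω
  change (firstHop I R ω ≤ x) = (I 0 ω ≤ x)
  rw [firstHop_le_iff_of_radius_le hω hRx, vehiclePos_zero]

lemma ae_exists_lt_vehiclePos (hr : 0 < r) (hmeas : ∀ n, Measurable (I n))
    (hindep : iIndepFun I μ) (hlaw : ∀ n, μ.map (I n) = expMeasure r) (R : ℝ) :
    ∀ᵐ ω ∂μ, ∃ n, R < vehiclePos I n ω := by
  have hlt : expMeasure r (Iic R) < 1 := by
    rw [expMeasure_Iic hr]
    split_ifs
    · exact ENNReal.ofReal_lt_one.2 (by linarith [exp_pos (-(r * R))])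
    · simp
  have hgap : ∀ᵐ ω ∂μ, ∃ n, R < I n ω := by
    refine ae_iff.2 ?_
    push Not
    refine hindep.measure_forall_le_eq_zero hlt fun n ↦ le_of_eq ?_
    rw [← hlaw n, Measure.map_apply (hmeas n) measurableSet_Iic]
    rfl
  filter_upwards [hgap, ae_all_iff.2 fun n ↦ ae_nonneg_of_map_eq_expMeasure hr (hmeas n) (hlaw n)]
    with ω ⟨n, hn⟩ hω
  exact ⟨n, hn.trans_le
    (Finset.single_le_sum (fun i _ ↦ hω i) (Finset.mem_range.2 n.lt_succ_self))⟩

variable [IsProbabilityMeasure μ]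

lemma measure_firstHop_le_of_le_radius (hr : 0 < r) (hmeas : ∀ n, Measurable (I n))
    (hindep : iIndepFun I μ) (hlaw : ∀ n, μ.map (I n) = expMeasure r) (hx : 0 ≤ x)
    (hxR : x ≤ R) :
    μ {ω | firstHop I R ω ≤ x}
      = ENNReal.ofReal (exp (-(r * (R - x))) * (1 - exp (-(r * x)))) := by
  set A : ℕ → Set Ω := fun k ↦ {ω | vehiclePos I k ω ≤ x ∧ R < vehiclePos I (k + 1) ω}
  have hmono := ae_monotone_vehiclePos fun n ↦ ae_nonneg_of_map_eq_expMeasure hr (hmeas n) (hlaw n)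
  have hunion : {ω | firstHop I R ω ≤ x} =ᵐ[μ] ⋃ k, A k := by
    filter_upwards [hmono, ae_exists_lt_vehiclePos hr hmeas hindep hlaw R] with ω hω hfar
    change (firstHop I R ω ≤ x) = (ω ∈ ⋃ k, A k)
    rw [mem_iUnion, firstHop_le_iff_of_le_radius hω hfar hxR]
    rfl
  have hdisj : Pairwise (Function.onFun (AEDisjoint μ) A) := by
    intro i j hij
    refine measure_mono_null (fun ω hω_ij ↦ ?_) (ae_iff.1 hmono)
    obtain ⟨hi, hj⟩ := hω_ij
    intro hω
    refine hij ?_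
    have hle : ∀ {i j}, ω ∈ A i → vehiclePos I j ω ≤ x → j ≤ i := fun hi hj ↦ by
      by_contra hji
      exact (hi.2.trans_le (hω (not_le.1 hji))).not_ge (hj.trans hxR)
    exact le_antisymm (hle hj hi.1) (hle hi hj.1)
  have hA : ∀ k, μ (A k) = ENNReal.ofReal (exp (-(r * R)) * ((r * x) ^ (k + 1) / (k + 1)!)) := by
    intro k
    rw [← measure_sum_range_le_lt_add hr hmeas hindep hlaw (k + 1) hx hxR]
    congr 1
    ext ω
    simp [A, vehiclePos, Finset.sum_range_succ _ (k + 1)]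
  rw [measure_congr hunion, measure_iUnion₀ hdisj fun k ↦ ?_, tsum_congr hA,
    ← ENNReal.ofReal_tsum_of_nonneg (fun k ↦ by positivity)
      ((Real.hasSum_pow_succ_div_factorial _).mul_left _).summable,
    ((Real.hasSum_pow_succ_div_factorial _).mul_left _).tsum_eq]
  · congr 1
    have hinv : exp (r * x) * exp (-(r * x)) = 1 := by rw [← exp_add, add_neg_cancel, exp_zero]
    rw [show -(r * (R - x)) = -(r * R) + r * x by ring, exp_add]
    linear_combination exp (-(r * R)) * hinv
  · exact ((measurableSet_le (measurable_vehiclePos hmeas k) measurable_const).inter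
      (measurableSet_lt measurable_const (measurable_vehiclePos hmeas (k + 1)))).nullMeasurableSet

end FirstHop

/-- With i.i.d. `Exp(λ)` interdistances and coverage radius `R`, the first hop of the
shortest path has CDF `F_{τ_1}(x) = e^{-λ(R-x)}(1-e^{-λx})` for `0 ≤ x ≤ R` and
`F_{τ_1}(x) = 1 - e^{-λx}` for `x ≥ R`. -/
theorem stmt13 {Ω : Type*} [MeasurableSpace Ω] (μ : Measure Ω) [IsProbabilityMeasure μ]
    (lam R : ℝ) (hlam : 0 < lam) (hR : 0 < R)
    (I : ℕ → Ω → ℝ) (hmeas : ∀ n, Measurable (I n))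
    (hindep : ProbabilityTheory.iIndepFun I μ)
    (hCDF : ∀ n, ∀ x : ℝ, 0 ≤ x →
      (μ {ω | I n ω ≤ x}).toReal = 1 - Real.exp (-(lam * x)))
    (hCDFneg : ∀ n, ∀ x : ℝ, x < 0 → μ {ω | I n ω ≤ x} = 0) :
    (∀ x : ℝ, 0 ≤ x → x ≤ R →
      (μ {ω | firstHop I R ω ≤ x}).toReal
        = Real.exp (-(lam * (R - x))) * (1 - Real.exp (-(lam * x))))
    ∧ (∀ x : ℝ, R ≤ x →
      (μ {ω | firstHop I R ω ≤ x}).toReal = 1 - Real.exp (-(lam * x))) := by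
  have hlaw : ∀ n, μ.map (I n) = expMeasure lam :=
    fun n ↦ map_eq_expMeasure_of_cdf hlam (hmeas n) (hCDF n) (hCDFneg n)
  refine ⟨fun x hx hxR ↦ ?_, fun x hRx ↦ ?_⟩
  · rw [measure_firstHop_le_of_le_radius hlam hmeas hindep hlaw hx hxR,
      ENNReal.toReal_ofReal (mul_nonneg (exp_pos _).le
        (sub_nonneg.2 (exp_le_one_iff.2 (neg_nonpos.2 (mul_nonneg hlam.le hx)))))]
  · rw [measure_congr (firstHop_le_ae_eq_of_radius_le
        (fun n ↦ ae_nonneg_of_map_eq_expMeasure hlam (hmeas n) (hlaw n)) hRx),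
      hCDF 0 x (hR.le.trans hRx)]
end
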